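/- Let d ≥ 3. For each x ∈ ℝ^d let c(x) be a real symmetric positive semidefinite d×d matrix and let ν(x,·) be a Borel measure on ℝ^d with ν(x,{0}) = 0 and sup_{x∈ℝ^d} ∫_{ℝ^d} min{1, |y|²} ν(x,dy) < ∞ and sup_{x∈ℝ^d} max_{i,j} |c_{ij}(x)| < ∞. Define Re q(x,ξ) := (1/2)⟨ξ, c(x)ξ⟩ + ∫_{ℝ^d} (1 − cos⟨ξ,y⟩) ν(x,dy), and assume ξ ↦ inf_{x∈ℝ^d} Re q(x,ξ) is Borel measurable. If liminf_{|ξ|→0} ( sup_{t>0} inf_{x∈ℝ^d} ( ⟨ξ, c(x)ξ⟩ + ∫_{{|y|≤t}} ⟨ξ,y⟩² ν(x,dy) ) ) / |ξ|² > 0, then ∫_{{|ξ|<r}} dξ / inf_{x∈ℝ^d} Re q(x,ξ) < ∞ for all sufficiently small r > 0. -/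

import Mathlib

open MeasureTheory Filter Topology
open scoped ENNReal

/-- The real part of a symbol with Lévy triplet `(b(x), c(x), ν(x,dy))`:
`Re q(x,ξ) = (1/2)⟨ξ, c(x)ξ⟩ + ∫ (1 − cos⟨ξ,y⟩) ν(x,dy)`, valued in `[0,∞]`. -/
noncomputable def reSymbol (d : ℕ)
    (c : EuclideanSpace ℝ (Fin d) → Matrix (Fin d) (Fin d) ℝ)
    (ν : EuclideanSpace ℝ (Fin d) → MeasureTheory.Measure (EuclideanSpace ℝ (Fin d)))
    (x ξ : EuclideanSpace ℝ (Fin d)) : ℝ≥0∞ :=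
  ENNReal.ofReal ((1 / 2) * ∑ i, ∑ j, ξ i * c x i j * ξ j) +
    ∫⁻ y, ENNReal.ofReal (1 - Real.cos ((inner ℝ ξ y : ℝ))) ∂(ν x)

/-!
Write `F_t(x,ξ) = ⟨ξ,c(x)ξ⟩ + ∫_{‖y‖≤t} ⟨ξ,y⟩² ν(x,dy)`. Since `u² ≤ 5 (1 - cos u)` for `|u| ≤ π`,
`F_t(x,ξ) ≤ 5 Re q(x,ξ)` as soon as `t‖ξ‖ ≤ π`. The form `F_t` is monotone in `t` and
2-homogeneous in `ξ`, and the uniform bounds on `c` and on the `min 1 ‖y‖²`-moments of `ν` make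
`ξ ↦ inf_x F_t(x,ξ)` lower semicontinuous. The liminf hypothesis gives, at each point of a small
sphere, some `t` with `inf_x F_t > ε‖ξ‖²`; compactness of the sphere makes `t` uniform, and
homogeneity carries the bound to every `ξ ≠ 0`. Hence `inf_x Re q(x,ξ) ≥ (ε/5)‖ξ‖²` near the
origin, where `‖ξ‖⁻²` is integrable because `d ≥ 3`.
-/

open Metric Set Real

theorem measurableSet_norm_le {E : Type*} [NormedAddCommGroup E] [MeasurableSpace E]
    [OpensMeasurableSpace E] (t : ℝ) : MeasurableSet {y : E | ‖y‖ ≤ t} :=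
  measurableSet_le measurable_norm measurable_const

theorem lowerSemicontinuous_of_le_add_mul_dist {X : Type*} [PseudoMetricSpace X]
    {f : X → ℝ≥0∞}
    (h : ∀ x₀, ∃ C ≠ ∞, ∀ᶠ x in 𝓝 x₀, f x₀ ≤ f x + C * ENNReal.ofReal (dist x x₀)) :
    LowerSemicontinuous f := by
  intro x₀ y hy
  obtain ⟨C, hC, hle⟩ := h x₀
  have hdist : Tendsto (fun x => ENNReal.ofReal (dist x x₀)) (𝓝 x₀) (𝓝 0) := by
    simpa using ENNReal.tendsto_ofReal ((continuous_id.dist continuous_const).tendsto' x₀ 0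
      (dist_self x₀))
  have hlim : Tendsto (fun x => f x₀ - C * ENNReal.ofReal (dist x x₀)) (𝓝 x₀) (𝓝 (f x₀)) := by
    simpa using ENNReal.Tendsto.sub tendsto_const_nhds
      (ENNReal.Tendsto.const_mul hdist (Or.inr hC)) (Or.inr (by simp))
  filter_upwards [hlim.eventually (lt_mem_nhds hy), hle] with x hx hxle
  exact hx.trans_le (tsub_le_iff_right.2 hxle)

theorem IsCompact.exists_forall_lt_of_monotone {X β : Type*} [TopologicalSpace X] [Preorder β]
    {s : Set X} (hs : IsCompact s) {F : ℕ → X → β} (hF : ∀ n, LowerSemicontinuous (F n))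
    (hmono : Monotone F) {a : β} (h : ∀ x ∈ s, ∃ n, a < F n x) :
    ∃ n, ∀ x ∈ s, a < F n x :=
  hs.elim_directed_cover (fun n => F n ⁻¹' Ioi a) (fun n => (hF n).isOpen_preimage a)
    (fun x hx => mem_iUnion.2 (h x hx))
    (Monotone.directed_le fun _ _ hmn _ hx => lt_of_lt_of_le hx (hmono hmn _))

theorem mul_sq_norm_lt_of_forall_mem_sphere {E : Type*} [NormedAddCommGroup E] [NormedSpace ℝ E]
    {g : E → ℝ≥0∞} (hg : ∀ (s : ℝ) ξ, g (s • ξ) = ENNReal.ofReal (s ^ 2) * g ξ) {ρ : ℝ}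
    (hρ : 0 < ρ) {a : ℝ≥0∞} (h : ∀ ξ ∈ sphere (0 : E) ρ, a * ENNReal.ofReal (ρ ^ 2) < g ξ)
    {ξ : E} (hξ : ξ ≠ 0) : a * ENNReal.ofReal (‖ξ‖ ^ 2) < g ξ := by
  have hnorm : 0 < ‖ξ‖ := norm_pos_iff.2 hξ
  have hs : 0 < ‖ξ‖ / ρ := by positivity
  have hmem : (‖ξ‖ / ρ)⁻¹ • ξ ∈ sphere (0 : E) ρ := by
    rw [mem_sphere_zero_iff_norm, norm_smul, Real.norm_eq_abs, abs_inv, abs_of_pos hs]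
    field_simp
  calc a * ENNReal.ofReal (‖ξ‖ ^ 2)
        = a * ENNReal.ofReal (ρ ^ 2) * ENNReal.ofReal ((‖ξ‖ / ρ) ^ 2) := by
        rw [mul_assoc, ← ENNReal.ofReal_mul (by positivity)]
        field_simp
    _ < g ((‖ξ‖ / ρ)⁻¹ • ξ) * ENNReal.ofReal ((‖ξ‖ / ρ) ^ 2) :=
        ENNReal.mul_lt_mul_left (by positivity) ENNReal.ofReal_ne_top (h _ hmem)
    _ = g ξ := by rw [mul_comm, ← hg, smul_smul, mul_inv_cancel₀ hs.ne', one_smul]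

theorem setLIntegral_ball_inv_lt_top_of_mul_sq_le {E : Type*} [NormedAddCommGroup E]
    [NormedSpace ℝ E] [FiniteDimensional ℝ E] [MeasurableSpace E] [BorelSpace E]
    {μ : Measure E} [μ.IsAddHaarMeasure] (hE : 2 < Module.finrank ℝ E) {ε r : ℝ}
    (hε : 0 < ε) {f : E → ℝ≥0∞}
    (hf : ∀ ξ ∈ ball (0 : E) r, ξ ≠ 0 → ENNReal.ofReal (ε * ‖ξ‖ ^ 2) ≤ f ξ) :
    ∫⁻ ξ in ball (0 : E) r, (f ξ)⁻¹ ∂μ < ∞ := by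
  have : Nontrivial E := Module.nontrivial_of_finrank_pos (R := ℝ) (by omega)
  have hint : IntegrableOn (fun ξ : E => (ε * ‖ξ‖ ^ 2)⁻¹) (ball 0 r) μ := by
    refine integrableOn_ball_of_norm_le_rpow (α := 2) (C := ε⁻¹) (by omega)
      (by exact_mod_cast hE) (ae_of_all _ fun ξ => ?_) (by fun_prop)
    rw [Real.rpow_neg (norm_nonneg _), Real.rpow_two, norm_inv, norm_mul, norm_pow, norm_norm,
      Real.norm_of_nonneg hε.le, mul_inv]
  have hae : ∀ᵐ ξ ∂μ.restrict (ball 0 r), (f ξ)⁻¹ ≤ ENNReal.ofReal ((ε * ‖ξ‖ ^ 2)⁻¹) := by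
    filter_upwards [ae_restrict_mem measurableSet_ball,
      ae_restrict_of_ae (compl_mem_ae_iff.2 (measure_singleton (0 : E)))] with ξ hball hξ
    have hpos : 0 < ε * ‖ξ‖ ^ 2 := by
      have : ξ ≠ 0 := hξ
      positivity
    rw [ENNReal.ofReal_inv_of_pos hpos]
    exact ENNReal.inv_le_inv.2 (hf ξ hball hξ)
  exact (lintegral_mono_ae hae).trans_lt hint.lintegral_lt_top

theorem sq_le_five_mul_one_sub_cos {u : ℝ} (hu : |u| ≤ π) : u ^ 2 ≤ 5 * (1 - cos u) := by
  have hcos := cos_le_one_sub_mul_cos_sq hu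
  have hpi : π ^ 2 ≤ 10 := by nlinarith [pi_lt_d2, pi_pos]
  have hpi' : 1 ≤ 10 / π ^ 2 := (one_le_div (by positivity)).2 hpi
  calc u ^ 2 ≤ 10 / π ^ 2 * u ^ 2 := le_mul_of_one_le_left (sq_nonneg u) hpi'
    _ = 5 * (2 / π ^ 2 * u ^ 2) := by ring
    _ ≤ 5 * (1 - cos u) := by linarith

theorem sq_le_mul_min_one_sq {a t : ℝ} (ha : |a| ≤ t) : a ^ 2 ≤ (t ^ 2 + 1) * min 1 (a ^ 2) := by
  have hat : a ^ 2 ≤ t ^ 2 := sq_le_sq' (abs_le.1 ha).1 (abs_le.1 ha).2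
  rcases le_total (a ^ 2) 1 with h | h
  · rw [min_eq_right h]
    nlinarith [sq_nonneg t, sq_nonneg a]
  · rw [min_eq_left h]
    linarith

theorem inner_sq_le_inner_sq_add {F : Type*} [NormedAddCommGroup F] [InnerProductSpace ℝ F]
    {ξ ξ' : F} {R : ℝ} (hξ : ‖ξ‖ ≤ R) (hξ' : ‖ξ'‖ ≤ R) (y : F) :
    inner ℝ ξ y ^ 2 ≤ inner ℝ ξ' y ^ 2 + 2 * R * ‖ξ - ξ'‖ * ‖y‖ ^ 2 := by
  have hprod : |inner ℝ (ξ + ξ') y * inner ℝ (ξ - ξ') y| ≤ (2 * R * ‖y‖) * (‖ξ - ξ'‖ * ‖y‖) := by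
    have hadd : |inner ℝ (ξ + ξ') y| ≤ 2 * R * ‖y‖ := (abs_real_inner_le_norm _ _).trans
      (by gcongr; exact (norm_add_le _ _).trans (by linarith))
    rw [abs_mul]
    exact mul_le_mul hadd (abs_real_inner_le_norm _ _) (abs_nonneg _)
      (by have := (norm_nonneg ξ).trans hξ; positivity)
  calc inner ℝ ξ y ^ 2 = inner ℝ ξ' y ^ 2 + inner ℝ (ξ + ξ') y * inner ℝ (ξ - ξ') y := by
        rw [inner_add_left, inner_sub_left]; ring
    _ ≤ inner ℝ ξ' y ^ 2 + (2 * R * ‖y‖) * (‖ξ - ξ'‖ * ‖y‖) := by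
        grw [← hprod, ← le_abs_self]
    _ = _ := by ring

theorem quadForm_le_quadForm_add {d : ℕ} (A : Matrix (Fin d) (Fin d) ℝ) {K R : ℝ}
    (hA : ∀ i j, |A i j| ≤ K) {ξ ξ' : EuclideanSpace ℝ (Fin d)} (hξ : ‖ξ‖ ≤ R) (hξ' : ‖ξ'‖ ≤ R) :
    ∑ i, ∑ j, ξ i * A i j * ξ j ≤
      ∑ i, ∑ j, ξ' i * A i j * ξ' j + d * d * (2 * K * R) * ‖ξ - ξ'‖ := by
  have hcoord : ∀ (v : EuclideanSpace ℝ (Fin d)) i, |v i| ≤ ‖v‖ := fun v i => by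
    simpa using PiLp.norm_apply_le v i
  have hterm : ∀ i j,
      ξ i * A i j * ξ j ≤ ξ' i * A i j * ξ' j + 2 * K * R * ‖ξ - ξ'‖ := by
    intro i j
    have hK : 0 ≤ K := (abs_nonneg _).trans (hA i j)
    have hsum : |ξ i * (ξ j - ξ' j) + (ξ i - ξ' i) * ξ' j| ≤ 2 * R * ‖ξ - ξ'‖ := by
      refine (abs_add_le _ _).trans ?_
      rw [abs_mul, abs_mul]
      have h1 := hcoord (ξ - ξ') i
      have h2 := hcoord (ξ - ξ') j
      simp only [PiLp.sub_apply] at h1 h2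
      nlinarith [(hcoord ξ i).trans hξ, (hcoord ξ' j).trans hξ', abs_nonneg (ξ i),
        abs_nonneg (ξ' j), abs_nonneg (ξ i - ξ' i), abs_nonneg (ξ j - ξ' j)]
    have hdiff : |A i j * (ξ i * (ξ j - ξ' j) + (ξ i - ξ' i) * ξ' j)| ≤ K * (2 * R * ‖ξ - ξ'‖) := by
      rw [abs_mul]; gcongr; exact hA i j
    linarith [le_abs_self (A i j * (ξ i * (ξ j - ξ' j) + (ξ i - ξ' i) * ξ' j))]
  calc ∑ i, ∑ j, ξ i * A i j * ξ j ≤ ∑ i, ∑ j, (ξ' i * A i j * ξ' j + 2 * K * R * ‖ξ - ξ'‖) := by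
        gcongr with i _ j _; exact hterm i j
    _ = _ := by simp [Finset.sum_add_distrib]; ring

section TruncQuadForm

variable {d : ℕ} (c : EuclideanSpace ℝ (Fin d) → Matrix (Fin d) (Fin d) ℝ)
  (ν : EuclideanSpace ℝ (Fin d) → Measure (EuclideanSpace ℝ (Fin d)))

noncomputable def truncQuadForm (t : ℝ) (x ξ : EuclideanSpace ℝ (Fin d)) : ℝ≥0∞ :=
  ENNReal.ofReal (∑ i, ∑ j, ξ i * c x i j * ξ j) +
    ∫⁻ y in {y : EuclideanSpace ℝ (Fin d) | ‖y‖ ≤ t}, ENNReal.ofReal (inner ℝ ξ y ^ 2) ∂(ν x)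

theorem truncQuadForm_mono {t t' : ℝ} (h : t ≤ t') (x ξ : EuclideanSpace ℝ (Fin d)) :
    truncQuadForm c ν t x ξ ≤ truncQuadForm c ν t' x ξ :=
  add_le_add_right (lintegral_mono_set fun _ hy => le_trans hy h) _

theorem truncQuadForm_smul (t : ℝ) (x : EuclideanSpace ℝ (Fin d)) (s : ℝ)
    (ξ : EuclideanSpace ℝ (Fin d)) :
    truncQuadForm c ν t x (s • ξ) = ENNReal.ofReal (s ^ 2) * truncQuadForm c ν t x ξ := by
  simp only [truncQuadForm, mul_add, PiLp.smul_apply, smul_eq_mul, real_inner_smul_left, mul_pow,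
    ENNReal.ofReal_mul (sq_nonneg s)]
  congr 1
  · rw [← ENNReal.ofReal_mul (sq_nonneg s), Finset.mul_sum]
    simp only [Finset.mul_sum]
    congr 1
    exact Finset.sum_congr rfl fun i _ => Finset.sum_congr rfl fun j _ => by ring
  · exact lintegral_const_mul' _ _ ENNReal.ofReal_ne_top

theorem truncQuadForm_le_five_mul_reSymbol {t : ℝ} (x : EuclideanSpace ℝ (Fin d))
    {ξ : EuclideanSpace ℝ (Fin d)} (hξ : t * ‖ξ‖ ≤ π) :
    truncQuadForm c ν t x ξ ≤ 5 * reSymbol d c ν x ξ := by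
  rw [truncQuadForm, reSymbol, mul_add, ← ENNReal.ofReal_ofNat 5]
  gcongr ?_ + ?_
  · rw [← ENNReal.ofReal_mul (by norm_num)]
    refine ENNReal.ofReal_le_ofReal_iff'.2 ?_
    rcases le_total (∑ i, ∑ j, ξ i * c x i j * ξ j) 0 with h | h
    · exact Or.inr h
    · exact Or.inl (by linarith)
  · have hpt : ∀ y ∈ {y : EuclideanSpace ℝ (Fin d) | ‖y‖ ≤ t}, ENNReal.ofReal (inner ℝ ξ y ^ 2) ≤
        ENNReal.ofReal 5 * ENNReal.ofReal (1 - cos (inner ℝ ξ y)) := by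
      intro y hy
      rw [← ENNReal.ofReal_mul (by norm_num)]
      refine ENNReal.ofReal_le_ofReal (sq_le_five_mul_one_sub_cos ?_)
      calc |inner ℝ ξ y| ≤ ‖ξ‖ * ‖y‖ := abs_real_inner_le_norm ξ y
        _ ≤ ‖ξ‖ * t := by gcongr; exact hy
        _ ≤ π := by linarith
    calc _ ≤ ∫⁻ y in {y : EuclideanSpace ℝ (Fin d) | ‖y‖ ≤ t},
          ENNReal.ofReal 5 * ENNReal.ofReal (1 - cos (inner ℝ ξ y)) ∂(ν x) :=
          setLIntegral_mono' (measurableSet_norm_le t) hpt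
      _ ≤ ∫⁻ y, ENNReal.ofReal 5 * ENNReal.ofReal (1 - cos (inner ℝ ξ y)) ∂(ν x) :=
          setLIntegral_le_lintegral _ _
      _ = _ := lintegral_const_mul' _ _ ENNReal.ofReal_ne_top

theorem truncQuadForm_le_add {K R t : ℝ} {x : EuclideanSpace ℝ (Fin d)}
    (hK : ∀ i j, |c x i j| ≤ K) {ξ ξ' : EuclideanSpace ℝ (Fin d)} (hξ : ‖ξ‖ ≤ R)
    (hξ' : ‖ξ'‖ ≤ R) :
    truncQuadForm c ν t x ξ ≤ truncQuadForm c ν t x ξ' + ENNReal.ofReal ‖ξ - ξ'‖ *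
      (ENNReal.ofReal (d * d * (2 * K * R)) + ENNReal.ofReal (2 * R * (t ^ 2 + 1)) *
        ∫⁻ y, ENNReal.ofReal (min 1 (‖y‖ ^ 2)) ∂(ν x)) := by
  have hR : 0 ≤ R := (norm_nonneg _).trans hξ
  have hquad : ENNReal.ofReal (∑ i, ∑ j, ξ i * c x i j * ξ j) ≤
      ENNReal.ofReal (∑ i, ∑ j, ξ' i * c x i j * ξ' j) +
        ENNReal.ofReal ‖ξ - ξ'‖ * ENNReal.ofReal (d * d * (2 * K * R)) := by
    rw [← ENNReal.ofReal_mul (norm_nonneg _), mul_comm ‖ξ - ξ'‖]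
    exact (ENNReal.ofReal_le_ofReal (quadForm_le_quadForm_add (c x) hK hξ hξ')).trans
      ENNReal.ofReal_add_le
  have hpt : ∀ y ∈ {y : EuclideanSpace ℝ (Fin d) | ‖y‖ ≤ t}, ENNReal.ofReal (inner ℝ ξ y ^ 2) ≤
      ENNReal.ofReal (inner ℝ ξ' y ^ 2) + ENNReal.ofReal (‖ξ - ξ'‖ * (2 * R * (t ^ 2 + 1))) *
        ENNReal.ofReal (min 1 (‖y‖ ^ 2)) := by
    intro y hy
    rw [← ENNReal.ofReal_mul (by positivity)]
    refine (ENNReal.ofReal_le_ofReal ?_).trans ENNReal.ofReal_add_le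
    have hmin := sq_le_mul_min_one_sq (a := ‖y‖) (t := t) (by rwa [abs_norm])
    calc inner ℝ ξ y ^ 2 ≤ inner ℝ ξ' y ^ 2 + 2 * R * ‖ξ - ξ'‖ * ‖y‖ ^ 2 :=
          inner_sq_le_inner_sq_add hξ hξ' y
      _ ≤ inner ℝ ξ' y ^ 2 + 2 * R * ‖ξ - ξ'‖ * ((t ^ 2 + 1) * min 1 (‖y‖ ^ 2)) := by gcongr
      _ = _ := by ring
  have hint : ∫⁻ y in {y : EuclideanSpace ℝ (Fin d) | ‖y‖ ≤ t},
        ENNReal.ofReal (inner ℝ ξ y ^ 2) ∂(ν x) ≤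
      ∫⁻ y in {y : EuclideanSpace ℝ (Fin d) | ‖y‖ ≤ t},
        ENNReal.ofReal (inner ℝ ξ' y ^ 2) ∂(ν x) + ENNReal.ofReal ‖ξ - ξ'‖ *
          (ENNReal.ofReal (2 * R * (t ^ 2 + 1)) *
            ∫⁻ y, ENNReal.ofReal (min 1 (‖y‖ ^ 2)) ∂(ν x)) := by
    calc _ ≤ _ := setLIntegral_mono' (measurableSet_norm_le t) hpt
      _ = _ := by
        rw [lintegral_add_right _ (by fun_prop), lintegral_const_mul' _ _ ENNReal.ofReal_ne_top]
      _ ≤ _ := by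
        rw [ENNReal.ofReal_mul (norm_nonneg _), mul_assoc]
        gcongr _ + _ * (_ * ?_)
        exact setLIntegral_le_lintegral _ _
  calc truncQuadForm c ν t x ξ ≤ _ := add_le_add hquad hint
    _ = _ := by rw [truncQuadForm, mul_add]; ring

theorem lowerSemicontinuous_iInf_truncQuadForm {K : ℝ} (hK : ∀ x i j, |c x i j| ≤ K)
    (hν : ⨆ x, ∫⁻ y, ENNReal.ofReal (min 1 (‖y‖ ^ 2)) ∂(ν x) < ∞) (t : ℝ) :
    LowerSemicontinuous fun ξ => ⨅ x, truncQuadForm c ν t x ξ := by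
  refine lowerSemicontinuous_of_le_add_mul_dist fun ξ₀ => ?_
  set M := ⨆ x, ∫⁻ y, ENNReal.ofReal (min 1 (‖y‖ ^ 2)) ∂(ν x)
  set R := ‖ξ₀‖ + 1
  refine ⟨ENNReal.ofReal (d * d * (2 * K * R)) + ENNReal.ofReal (2 * R * (t ^ 2 + 1)) * M,
    by finiteness, ?_⟩
  filter_upwards [Metric.ball_mem_nhds ξ₀ one_pos] with ξ hξ
  have hξR : ‖ξ‖ ≤ R := by
    have := norm_le_norm_add_norm_sub' ξ ξ₀
    rw [Metric.mem_ball, dist_eq_norm] at hξ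
    linarith
  rw [ENNReal.iInf_add]
  refine le_iInf fun x => (iInf_le _ x).trans ?_
  refine (truncQuadForm_le_add c ν (hK x) (by linarith) hξR).trans ?_
  rw [dist_comm, dist_eq_norm, mul_comm (ENNReal.ofReal _)]
  gcongr
  exact le_iSup (fun x => ∫⁻ y, ENNReal.ofReal (min 1 (‖y‖ ^ 2)) ∂(ν x)) x

theorem exists_nat_lt_iInf_truncQuadForm {a : ℝ≥0∞} {ξ : EuclideanSpace ℝ (Fin d)}
    (h : a < ⨆ (t : ℝ) (_ : 0 < t), ⨅ x, truncQuadForm c ν t x ξ) :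
    ∃ n : ℕ, a < ⨅ x, truncQuadForm c ν n x ξ := by
  obtain ⟨t, ht⟩ := lt_iSup_iff.1 h
  obtain ⟨-, ht⟩ := lt_iSup_iff.1 ht
  exact ⟨⌈t⌉₊, ht.trans_le (iInf_mono fun x => truncQuadForm_mono c ν (Nat.le_ceil t) x ξ)⟩

theorem exists_nat_forall_mul_sq_lt_iInf_truncQuadForm {K : ℝ} (hK : ∀ x i j, |c x i j| ≤ K)
    (hν : ⨆ x, ∫⁻ y, ENNReal.ofReal (min 1 (‖y‖ ^ 2)) ∂(ν x) < ∞) {ρ : ℝ} (hρ : 0 < ρ)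
    {a : ℝ≥0∞} (h : ∀ ξ ∈ sphere (0 : EuclideanSpace ℝ (Fin d)) ρ,
      a * ENNReal.ofReal (ρ ^ 2) < ⨆ (t : ℝ) (_ : 0 < t), ⨅ x, truncQuadForm c ν t x ξ) :
    ∃ N : ℕ, ∀ ξ : EuclideanSpace ℝ (Fin d), ξ ≠ 0 →
      a * ENNReal.ofReal (‖ξ‖ ^ 2) < ⨅ x, truncQuadForm c ν N x ξ := by
  obtain ⟨N, hN⟩ := (isCompact_sphere _ _).exists_forall_lt_of_monotone
    (fun n => lowerSemicontinuous_iInf_truncQuadForm c ν hK hν n)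
    (fun m n hmn ξ => iInf_mono fun x => truncQuadForm_mono c ν (Nat.cast_le.2 hmn) x ξ)
    fun ξ hξ => exists_nat_lt_iInf_truncQuadForm c ν (h ξ hξ)
  refine ⟨N, fun ξ hξ => mul_sq_norm_lt_of_forall_mem_sphere (fun s ξ => ?_) hρ hN hξ⟩
  simp only [truncQuadForm_smul]
  exact (ENNReal.mul_iInf fun h => absurd h ENNReal.ofReal_ne_top).symm

theorem iInf_truncQuadForm_le_five_mul_iInf_reSymbol {t : ℝ} {ξ : EuclideanSpace ℝ (Fin d)}
    (hξ : t * ‖ξ‖ ≤ π) :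
    ⨅ x, truncQuadForm c ν t x ξ ≤ 5 * ⨅ x, reSymbol d c ν x ξ := by
  rw [ENNReal.mul_iInf_of_ne (by norm_num) (by norm_num)]
  exact iInf_mono fun x => truncQuadForm_le_five_mul_reSymbol c ν x hξ

end TruncQuadForm

theorem exists_mul_sq_le_iInf_reSymbol {d : ℕ}
    {c : EuclideanSpace ℝ (Fin d) → Matrix (Fin d) (Fin d) ℝ}
    {ν : EuclideanSpace ℝ (Fin d) → Measure (EuclideanSpace ℝ (Fin d))}
    {K : ℝ} (hK : ∀ x i j, |c x i j| ≤ K)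
    (hν : ⨆ x, ∫⁻ y, ENNReal.ofReal (min 1 (‖y‖ ^ 2)) ∂(ν x) < ∞)
    (hliminf : 0 < liminf (fun ξ : EuclideanSpace ℝ (Fin d) =>
        (⨆ (t : ℝ) (_ : 0 < t), ⨅ x, truncQuadForm c ν t x ξ) / ENNReal.ofReal (‖ξ‖ ^ 2))
      (𝓝[≠] 0)) :
    ∃ ε > 0, ∃ r₀ > 0, ∀ ξ : EuclideanSpace ℝ (Fin d), ξ ≠ 0 → ‖ξ‖ < r₀ →
      ENNReal.ofReal (ε * ‖ξ‖ ^ 2) ≤ ⨅ x, reSymbol d c ν x ξ := by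
  obtain ⟨ε, -, hε0, hε⟩ := ENNReal.lt_iff_exists_real_btwn.1 hliminf
  have hεpos : 0 < ε := ENNReal.ofReal_pos.1 hε0
  obtain ⟨δ, hδ, hnear⟩ := Metric.eventually_nhds_iff.1
    (eventually_nhdsWithin_iff.1 (eventually_lt_of_lt_liminf hε))
  have hsphere : ∀ ξ ∈ sphere (0 : EuclideanSpace ℝ (Fin d)) (δ / 2),
      ENNReal.ofReal ε * ENNReal.ofReal ((δ / 2) ^ 2) <
        ⨆ (t : ℝ) (_ : 0 < t), ⨅ x, truncQuadForm c ν t x ξ := by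
    intro ξ hξ
    rw [mem_sphere_zero_iff_norm] at hξ
    have hlt := hnear (by rw [dist_zero_right, hξ]; linarith) (by rintro rfl; simp at hξ; linarith)
    rwa [hξ, ENNReal.lt_div_iff_mul_lt (Or.inr ENNReal.ofReal_ne_top)
      (Or.inl ENNReal.ofReal_ne_top)] at hlt
  obtain ⟨N, hN⟩ :=
    exists_nat_forall_mul_sq_lt_iInf_truncQuadForm c ν hK hν (by positivity) hsphere
  refine ⟨ε / 5, by positivity, π / (N + 1), by positivity, fun ξ hξ hξr => ?_⟩
  have hsmall : (N : ℝ) * ‖ξ‖ ≤ π := by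
    rw [lt_div_iff₀ (by positivity)] at hξr
    nlinarith [norm_nonneg ξ]
  have hfive :
      5 * ENNReal.ofReal (ε / 5 * ‖ξ‖ ^ 2) = ENNReal.ofReal ε * ENNReal.ofReal (‖ξ‖ ^ 2) := by
    rw [← ENNReal.ofReal_ofNat 5, ← ENNReal.ofReal_mul (by norm_num),
      ← ENNReal.ofReal_mul hεpos.le]
    ring_nf
  rw [← ENNReal.mul_le_mul_iff_right (a := 5) (by norm_num) (by norm_num), hfive]
  exact (hN ξ hξ).le.trans (iInf_truncQuadForm_le_five_mul_iInf_reSymbol c ν hsmall)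

theorem stmt4 (d : ℕ) (hd : 3 ≤ d)
    (c : EuclideanSpace ℝ (Fin d) → Matrix (Fin d) (Fin d) ℝ)
    (ν : EuclideanSpace ℝ (Fin d) → MeasureTheory.Measure (EuclideanSpace ℝ (Fin d)))
    (hν2 : (⨆ x, ∫⁻ y, ENNReal.ofReal (min 1 (‖y‖ ^ 2)) ∂(ν x)) < ∞)
    (K : ℝ) (hK : ∀ x i j, |c x i j| ≤ K)
    (hliminf : 0 < Filter.liminf
      (fun ξ : EuclideanSpace ℝ (Fin d) =>
        (⨆ (t : ℝ) (_ : 0 < t), ⨅ x,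
          (ENNReal.ofReal (∑ i, ∑ j, ξ i * c x i j * ξ j) +
            ∫⁻ y in {y : EuclideanSpace ℝ (Fin d) | ‖y‖ ≤ t},
              ENNReal.ofReal ((inner ℝ ξ y : ℝ) ^ 2) ∂(ν x))) /
          ENNReal.ofReal (‖ξ‖ ^ 2))
      (𝓝[≠] (0 : EuclideanSpace ℝ (Fin d)))) :
    ∃ r₀ > (0 : ℝ), ∀ r : ℝ, 0 < r → r < r₀ →
      ∫⁻ ξ in Metric.ball (0 : EuclideanSpace ℝ (Fin d)) r,
        (⨅ x, reSymbol d c ν x ξ)⁻¹ < ∞ := by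
  obtain ⟨ε, hε, r₀, hr₀, hbound⟩ := exists_mul_sq_le_iInf_reSymbol hK hν2 hliminf
  have hdim : 2 < Module.finrank ℝ (EuclideanSpace ℝ (Fin d)) := by
    rw [finrank_euclideanSpace_fin]; omega
  exact ⟨r₀, hr₀, fun r _ hr => setLIntegral_ball_inv_lt_top_of_mul_sq_le hdim hε
    fun ξ hξ hξ0 => hbound ξ hξ0 ((mem_ball_zero_iff.1 hξ).trans hr)⟩
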